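/- Let n ≥ 2, let Σ = Aff(B_n), let φ : Σ⁺ → (A^+(B_n),+) be the homomorphism with φ(f_1 f_2 ⋯ f_k) = f_1 + f_2 + ⋯ + f_k, let P = {ξ_{(1,2)}} ∪ {⟨(k,l),(1,1)⟩ : k,l ∈ [n]}, and let L = {x ∈ Σ⁺ : φ(x) ∈ P}. Then for all x, y ∈ Σ⁺, x ≈_L y if and only if φ(x) = φ(y). -/

import Mathlib

/-- The Brandt semigroup `B_n`: pairs from `Fin n × Fin n` together with a zero `ϑ = none`. -/
abbrev Brandt (n : ℕ) := Option (Fin n × Fin n)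

/-- Addition in the Brandt semigroup `B_n`. -/
def bAdd {n : ℕ} : Brandt n → Brandt n → Brandt n
  | some (i, j), some (k, l) => if j = k then some (i, l) else none
  | _, _ => none

/-- Pointwise addition on self-maps of `B_n`. -/
def padd {n : ℕ} (f g : Brandt n → Brandt n) : Brandt n → Brandt n :=
  fun x => bAdd (f x) (g x)

/-- Composition of self-maps of `B_n`, arguments written on the left: `x (f ∘ g) = (x f) g`. -/
def mcomp {n : ℕ} (f g : Brandt n → Brandt n) : Brandt n → Brandt n :=
  fun x => g (f x)

/-- The constant map `ξ_c`. -/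
def xi {n : ℕ} (c : Brandt n) : Brandt n → Brandt n := fun _ => c

/-- `f` is affine: `f = g + h` with `g` an endomorphism of `(B_n,+)` and `h` a constant map. -/
def IsAffine {n : ℕ} (f : Brandt n → Brandt n) : Prop :=
  ∃ (g : Brandt n → Brandt n) (c : Brandt n),
    (∀ a b, g (bAdd a b) = bAdd (g a) (g b)) ∧ f = padd g (xi c)

/-- Membership in `A⁺(B_n)`: the smallest subset of `M(B_n)` containing all affine maps and
closed under pointwise addition and composition. -/
inductive AP (n : ℕ) : (Brandt n → Brandt n) → Prop
  | base {f} : IsAffine f → AP n f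
  | add {f g} : AP n f → AP n g → AP n (padd f g)
  | comp {f g} : AP n f → AP n g → AP n (mcomp f g)

/-- The singleton-support map `⟨(k,l),(p,q)⟩` sending `(k,l)` to `(p,q)` and everything else to `ϑ`. -/
def sis {n : ℕ} (k l p q : Fin n) : Brandt n → Brandt n :=
  fun x => if x = some (k, l) then some (p, q) else none

/-- The `n`-support map `(p,q;σ)` sending `(i,p)` to `(iσ,q)` and everything else to `ϑ`. -/
def nsp {n : ℕ} (p q : Fin n) (σ : Equiv.Perm (Fin n)) : Brandt n → Brandt n
  | some (i, j) => if j = p then some (σ i, q) else none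
  | none => none

/-- Nonempty words over the alphabet `α` (the elements of the free semigroup `α⁺`). -/
def NEWord (α : Type*) := {l : List α // l ≠ []}

/-- Concatenation of nonempty words. -/
def neappend {α : Type*} (x y : NEWord α) : NEWord α :=
  ⟨x.1 ++ y.1, fun h => x.2 (List.append_eq_nil_iff.mp h).1⟩

/-- The syntactic congruence of `L ⊆ Σ⁺` on the free semigroup of nonempty words:
`x ≈_L y` iff `uxv ∈ L ↔ uyv ∈ L` for all nonempty words `u, v`. -/
def synSemiSetoid {α : Type*} (L : Set (List α)) : Setoid (NEWord α) where
  r x y := ∀ u v : List α, u ≠ [] → v ≠ [] → ((u ++ x.1 ++ v) ∈ L ↔ (u ++ y.1 ++ v) ∈ L)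
  iseqv := ⟨fun _ _ _ _ _ => Iff.rfl, fun h u v hu hv => (h u v hu hv).symm,
    fun h1 h2 u v hu hv => (h1 u v hu hv).trans (h2 u v hu hv)⟩

/-- The syntactic congruence of `L ⊆ Σ*` on the free monoid of all words:
`x ≈_L y` iff `uxv ∈ L ↔ uyv ∈ L` for all words `u, v`. -/
def synMonSetoid {α : Type*} (L : Set (List α)) : Setoid (List α) where
  r x y := ∀ u v : List α, ((u ++ x ++ v) ∈ L ↔ (u ++ y ++ v) ∈ L)
  iseqv := ⟨fun _ _ _ => Iff.rfl, fun h u v => (h u v).symm,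
    fun h1 h2 u v => (h1 u v).trans (h2 u v)⟩

/-- The sum `f + f + ⋯ + f` with `k+1` summands (the `(k+1)`-st additive power of `f`). -/
def addPow {n : ℕ} (f : Brandt n → Brandt n) : ℕ → (Brandt n → Brandt n)
  | 0 => f
  | k + 1 => padd (addPow f k) f

/-- The composite `f ∘ f ∘ ⋯ ∘ f` with `k+1` factors (the `(k+1)`-st compositional power of `f`). -/
def compPow {n : ℕ} (f : Brandt n → Brandt n) : ℕ → (Brandt n → Brandt n)
  | 0 => f
  | k + 1 => mcomp (compPow f k) f

/-- The word map `φ : Σ⁺ → A⁺(B_n)`, `φ(f₁ f₂ ⋯ f_k) = f₁ + f₂ + ⋯ + f_k` (junk value `ξ_ϑ` on `[]`). -/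
def phiW {n : ℕ} : List {f : Brandt n → Brandt n // IsAffine f} → (Brandt n → Brandt n)
  | [] => xi none
  | a :: t => List.foldl (fun acc s => padd acc s.val) a.val t

section Lemmas
variable {n : ℕ}

lemma bAdd_none_left (a : Brandt n) : bAdd none a = none := by cases a <;> rfl
lemma bAdd_none_right (a : Brandt n) : bAdd a none = none := by cases a <;> rfl

lemma bAdd_assoc (a b c : Brandt n) : bAdd (bAdd a b) c = bAdd a (bAdd b c) := by
  rcases a with _ | ⟨i, j⟩ <;> rcases b with _ | ⟨k, l⟩ <;> rcases c with _ | ⟨p, q⟩ <;>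
    simp only [bAdd, bAdd_none_left, bAdd_none_right] <;>
    split_ifs <;> simp_all [bAdd]

lemma padd_assoc (f g h : Brandt n → Brandt n) :
    padd (padd f g) h = padd f (padd g h) := by
  funext w; simp [padd, bAdd_assoc]

lemma phiW_cons (a : {f : Brandt n → Brandt n // IsAffine f}) (t) :
    phiW (a :: t) = List.foldl (fun acc s => padd acc s.val) a.val t := rfl

lemma foldl_padd_assoc (l : List {f : Brandt n → Brandt n // IsAffine f})
    (a b : Brandt n → Brandt n) :
    List.foldl (fun acc s => padd acc s.val) (padd a b) l =
      padd a (List.foldl (fun acc s => padd acc s.val) b l) := by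
  induction l generalizing b with
  | nil => rfl
  | cons c t ih => simp only [List.foldl_cons]; rw [padd_assoc, ih]

lemma phiW_append (w1 w2 : List {f : Brandt n → Brandt n // IsAffine f})
    (h1 : w1 ≠ []) (h2 : w2 ≠ []) :
    phiW (w1 ++ w2) = padd (phiW w1) (phiW w2) := by
  rcases w1 with _ | ⟨a, t1⟩
  · exact absurd rfl h1
  rcases w2 with _ | ⟨b, t2⟩
  · exact absurd rfl h2
  show List.foldl (fun acc s => padd acc s.val) a.val (t1 ++ b :: t2) = _
  rw [List.foldl_append, List.foldl_cons, foldl_padd_assoc]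
  rfl

end Lemmas
section Lemmas2
variable {n : ℕ}

lemma isAffine_xi (c : Brandt n) : IsAffine (xi c) := by
  rcases c with _ | ⟨p, q⟩
  · exact ⟨fun _ => none, none, fun a b => rfl, by funext w; rfl⟩
  · refine ⟨xi (some (p, p)), some (p, q), fun a b => ?_, ?_⟩
    · simp [xi, bAdd]
    · funext w; simp [xi, padd, bAdd]

lemma isAffine_nsp_one (t a : Fin n) : IsAffine (nsp t a 1) := by
  refine ⟨id, some (t, a), fun u v => rfl, ?_⟩
  funext w
  rcases w with _ | ⟨i, j⟩
  · rfl
  · simp [nsp, padd, xi, bAdd]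

lemma bAdd_ne_none {a b : Brandt n} (h : bAdd a b ≠ none) : a ≠ none ∧ b ≠ none := by
  constructor
  · rintro rfl; exact h (bAdd_none_left b)
  · rintro rfl; exact h (bAdd_none_right a)

lemma endo_const (g : Brandt n → Brandt n) (hg : ∀ a b, g (bAdd a b) = bAdd (g a) (g b))
    (hne : g none ≠ none) : ∀ z, g z = g none := by
  have h0 := hg none none
  rw [bAdd_none_left] at h0
  rcases hgn : g none with _ | ⟨i, j⟩
  · exact absurd hgn hne
  rw [hgn] at h0
  have hji : j = i := by
    by_contra hji
    simp [bAdd, hji] at h0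
  subst hji
  intro z
  have h1 := hg z none
  rw [bAdd_none_right, hgn] at h1
  rcases hz : g z with _ | ⟨k, l⟩
  · rw [hz, bAdd_none_left] at h1; exact absurd h1.symm (by simp)
  · rw [hz] at h1
    simp only [bAdd] at h1
    split_ifs at h1 with hl
    · simp only [Option.some.injEq, Prod.mk.injEq] at h1
      subst hl
      rw [h1.1]

lemma affine_const (f : Brandt n → Brandt n) (hf : IsAffine f) (hne : f none ≠ none) :
    ∀ z, f z = f none := by
  obtain ⟨g, c, hg, rfl⟩ := hf
  have hgn : g none ≠ none := (bAdd_ne_none hne).1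
  intro z
  show bAdd (g z) c = bAdd (g none) c
  rw [endo_const g hg hgn z]

lemma padd_const {f g : Brandt n → Brandt n}
    (hf : f none ≠ none → ∀ z, f z = f none)
    (hg : g none ≠ none → ∀ z, g z = g none) :
    padd f g none ≠ none → ∀ z, padd f g z = padd f g none := by
  intro hne z
  obtain ⟨h1, h2⟩ := bAdd_ne_none hne
  show bAdd (f z) (g z) = bAdd (f none) (g none)
  rw [hf h1 z, hg h2 z]

lemma foldl_const (l : List {f : Brandt n → Brandt n // IsAffine f})
    (a : Brandt n → Brandt n) (ha : a none ≠ none → ∀ z, a z = a none) :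
    (List.foldl (fun acc s => padd acc s.val) a l) none ≠ none →
      ∀ z, (List.foldl (fun acc s => padd acc s.val) a l) z =
        (List.foldl (fun acc s => padd acc s.val) a l) none := by
  induction l generalizing a with
  | nil => exact ha
  | cons c t ih =>
      simp only [List.foldl_cons]
      exact ih _ (padd_const ha (affine_const c.val c.2))

lemma phiW_const (w : List {f : Brandt n → Brandt n // IsAffine f})
    (hne : phiW w none ≠ none) : ∀ z, phiW w z = phiW w none := by
  rcases w with _ | ⟨a, t⟩
  · intro z; rfl
  · exact foldl_const t a.val (affine_const a.val a.2) hne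

end Lemmas2
section Lemmas3
variable {n : ℕ}

lemma bAdd_some (i j k l : Fin n) :
    bAdd (some (i, j)) (some (k, l)) = if j = k then some (i, l) else none := rfl

lemma nsp_apply (t a : Fin n) (σ : Equiv.Perm (Fin n)) (i j : Fin n) :
    nsp t a σ (some (i, j)) = if j = t then some (σ i, a) else none := rfl

lemma padd_apply (f g : Brandt n → Brandt n) (w : Brandt n) :
    padd f g w = bAdd (f w) (g w) := rfl

lemma main_sep_x (z : Fin n) (F : Brandt n → Brandt n) (s t a b : Fin n)
    (hF : F (some (s, t)) = some (a, b)) :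
    padd (padd (xi (some (z, s))) (nsp t a 1)) (padd F (xi (some (b, z)))) = sis s t z z := by
  funext w
  rcases w with _ | ⟨i, j⟩
  · simp [padd, xi, nsp, sis, bAdd_none_left, bAdd_none_right]
  · simp only [padd_apply, xi, nsp_apply, sis, Equiv.Perm.coe_one, id_eq]
    by_cases hj : j = t
    · subst hj
      by_cases hi : i = s
      · subst hi
        rw [hF]
        simp [bAdd_some]
      · simp [bAdd_some, Ne.symm hi, hi, bAdd_none_left]
    · simp [bAdd_some, hj, bAdd_none_left, bAdd_none_right]

lemma main_sep_y (z : Fin n) (G : Brandt n → Brandt n) (s t a b : Fin n)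
    (hG : G (some (s, t)) ≠ some (a, b)) :
    padd (padd (xi (some (z, s))) (nsp t a 1)) (padd G (xi (some (b, z)))) = xi none := by
  funext w
  rcases w with _ | ⟨i, j⟩
  · simp [padd, xi, nsp, bAdd_none_left, bAdd_none_right]
  · simp only [padd_apply, xi, nsp_apply, Equiv.Perm.coe_one, id_eq]
    by_cases hj : j = t
    · subst hj
      by_cases hi : i = s
      · subst hi
        rcases hGx : G (some (i, j)) with _ | ⟨e, f⟩
        · rw [bAdd_none_left, bAdd_none_right]
        · have hef : ¬(e = a ∧ f = b) := by
            rintro ⟨rfl, rfl⟩; exact hG hGx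
          rw [if_pos rfl, bAdd_some, if_pos rfl, bAdd_some]
          split_ifs with h1
          · rw [bAdd_some]
            split_ifs with h2
            · exact absurd ⟨h2.symm, h1⟩ hef
            · rfl
          · exact bAdd_none_right _
      · simp [bAdd_some, Ne.symm hi, bAdd_none_left]
    · simp [bAdd_some, hj, bAdd_none_left, bAdd_none_right]

lemma const_sep_x (z o c d : Fin n) (F : Brandt n → Brandt n)
    (hF : ∀ w, F w = some (c, d)) :
    padd (xi (some (z, c))) (padd F (xi (some (d, o)))) = xi (some (z, o)) := by
  funext w
  simp [padd_apply, xi, hF, bAdd_some]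

lemma const_sep_y_val (z o c d : Fin n) (G : Brandt n → Brandt n) (w : Brandt n) :
    padd (xi (some (z, c))) (padd G (xi (some (d, o)))) w = none ∨
    (padd (xi (some (z, c))) (padd G (xi (some (d, o)))) w = some (z, o) ∧ G w = some (c, d)) := by
  simp only [padd_apply, xi]
  rcases hGw : G w with _ | ⟨e, f⟩
  · left; rw [bAdd_none_left, bAdd_none_right]
  · rw [bAdd_some]
    split_ifs with h1
    · rw [bAdd_some]
      split_ifs with h2
      · right
        refine ⟨rfl, ?_⟩
        rw [← h2, h1]
      · left; rfl
    · left; exact bAdd_none_right _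

end Lemmas3
section Lemmas4
variable {n : ℕ}

lemma xi_none_not_in_P (hn : 2 ≤ n) (P : Set (Brandt n → Brandt n))
    (hP : P = {xi (some (⟨0, by linarith⟩, ⟨1, by linarith⟩))} ∪
      {f | ∃ k l : Fin n, f = sis k l ⟨0, by linarith⟩ ⟨0, by linarith⟩}) :
    xi (none : Brandt n) ∉ P := by
  rw [hP]
  rintro (h | ⟨k, l, h⟩)
  · have := congrFun h none
    simp [xi] at this
  · have := congrFun h (some (k, l))
    simp [xi, sis] at this

lemma sis_mem_P (hn : 2 ≤ n) (P : Set (Brandt n → Brandt n))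
    (hP : P = {xi (some (⟨0, by linarith⟩, ⟨1, by linarith⟩))} ∪
      {f | ∃ k l : Fin n, f = sis k l ⟨0, by linarith⟩ ⟨0, by linarith⟩})
    (s t : Fin n) : sis s t ⟨0, by linarith⟩ ⟨0, by linarith⟩ ∈ P := by
  rw [hP]
  exact Or.inr ⟨s, t, rfl⟩

lemma sep_main (hn : 2 ≤ n) (P : Set (Brandt n → Brandt n))
    (hP : P = {xi (some (⟨0, by linarith⟩, ⟨1, by linarith⟩))} ∪
      {f | ∃ k l : Fin n, f = sis k l ⟨0, by linarith⟩ ⟨0, by linarith⟩})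
    (X Y : List {f : Brandt n → Brandt n // IsAffine f}) (hX : X ≠ []) (hY : Y ≠ [])
    (s t a b : Fin n)
    (hF : phiW X (some (s, t)) = some (a, b))
    (hG : phiW Y (some (s, t)) ≠ some (a, b)) :
    ∃ u v : List {f : Brandt n → Brandt n // IsAffine f}, u ≠ [] ∧ v ≠ [] ∧
      phiW (u ++ X ++ v) ∈ P ∧ phiW (u ++ Y ++ v) ∉ P := by
  set z : Fin n := ⟨0, by linarith⟩ with hz
  refine ⟨[⟨xi (some (z, s)), isAffine_xi _⟩, ⟨nsp t a 1, isAffine_nsp_one t a⟩],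
    [⟨xi (some (b, z)), isAffine_xi _⟩], by simp, by simp, ?_, ?_⟩
  · have e1 : phiW ([⟨xi (some (z, s)), isAffine_xi _⟩, ⟨nsp t a 1, isAffine_nsp_one t a⟩]
        ++ X ++ [⟨xi (some (b, z)), isAffine_xi _⟩]) = sis s t z z := by
      rw [phiW_append _ _ (by simp) (by simp), phiW_append _ _ (by simp) hX, padd_assoc]
      exact main_sep_x z (phiW X) s t a b hF
    rw [e1]
    exact sis_mem_P hn P hP s t
  · have e2 : phiW ([⟨xi (some (z, s)), isAffine_xi _⟩, ⟨nsp t a 1, isAffine_nsp_one t a⟩]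
        ++ Y ++ [⟨xi (some (b, z)), isAffine_xi _⟩]) = xi none := by
      rw [phiW_append _ _ (by simp) (by simp), phiW_append _ _ (by simp) hY, padd_assoc]
      exact main_sep_y z (phiW Y) s t a b hG
    rw [e2]
    exact xi_none_not_in_P hn P hP

lemma sep_const (hn : 2 ≤ n) (P : Set (Brandt n → Brandt n))
    (hP : P = {xi (some (⟨0, by linarith⟩, ⟨1, by linarith⟩))} ∪
      {f | ∃ k l : Fin n, f = sis k l ⟨0, by linarith⟩ ⟨0, by linarith⟩})
    (X Y : List {f : Brandt n → Brandt n // IsAffine f}) (hX : X ≠ []) (hY : Y ≠ [])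
    (c d : Fin n) (z1 : Brandt n)
    (hF : ∀ w, phiW X w = some (c, d))
    (hG : phiW Y z1 ≠ some (c, d)) :
    ∃ u v : List {f : Brandt n → Brandt n // IsAffine f}, u ≠ [] ∧ v ≠ [] ∧
      phiW (u ++ X ++ v) ∈ P ∧ phiW (u ++ Y ++ v) ∉ P := by
  set z : Fin n := ⟨0, by linarith⟩ with hz
  set o : Fin n := ⟨1, by linarith⟩ with ho
  refine ⟨[⟨xi (some (z, c)), isAffine_xi _⟩], [⟨xi (some (d, o)), isAffine_xi _⟩],
    by simp, by simp, ?_, ?_⟩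
  · have e1 : phiW ([⟨xi (some (z, c)), isAffine_xi _⟩]
        ++ X ++ [⟨xi (some (d, o)), isAffine_xi _⟩]) = xi (some (z, o)) := by
      rw [phiW_append _ _ (by simp) (by simp), phiW_append _ _ (by simp) hX, padd_assoc]
      exact const_sep_x z o c d (phiW X) hF
    rw [e1, hP]
    exact Or.inl rfl
  · have e2 : phiW ([⟨xi (some (z, c)), isAffine_xi _⟩]
        ++ Y ++ [⟨xi (some (d, o)), isAffine_xi _⟩]) =
        padd (xi (some (z, c))) (padd (phiW Y) (xi (some (d, o)))) := by
      rw [phiW_append _ _ (by simp) (by simp), phiW_append _ _ (by simp) hY, padd_assoc]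
      rfl
    rw [e2, hP]
    rintro (h | ⟨k, l, h⟩)
    · rcases const_sep_y_val z o c d (phiW Y) z1 with h1 | ⟨h1, h2⟩
      · rw [Set.mem_singleton_iff] at h
        have := congrFun h z1
        rw [h1] at this
        simp [xi] at this
      · exact hG h2
    · have hkl := congrFun h (some (k, l))
      rcases const_sep_y_val z o c d (phiW Y) (some (k, l)) with h1 | ⟨h1, h2⟩
      · rw [h1] at hkl
        simp [sis] at hkl
      · rw [h1] at hkl
        have hkl2 : (some (z, o) : Brandt n) = some (⟨0, by linarith⟩, ⟨0, by linarith⟩) := by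
          simp [sis] at hkl
          rw [hkl, hz]
        simp only [Option.some.injEq, Prod.mk.injEq] at hkl2
        have h2 : (⟨1, by linarith⟩ : Fin n) = (⟨0, by linarith⟩ : Fin n) := ho.symm.trans hkl2.2
        simp [Fin.ext_iff] at h2

lemma master_sep (hn : 2 ≤ n) (P : Set (Brandt n → Brandt n))
    (hP : P = {xi (some (⟨0, by linarith⟩, ⟨1, by linarith⟩))} ∪
      {f | ∃ k l : Fin n, f = sis k l ⟨0, by linarith⟩ ⟨0, by linarith⟩})
    (X Y : List {f : Brandt n → Brandt n // IsAffine f}) (hX : X ≠ []) (hY : Y ≠ [])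
    (hdiff : phiW X ≠ phiW Y) :
    (∃ u v : List {f : Brandt n → Brandt n // IsAffine f}, u ≠ [] ∧ v ≠ [] ∧
      phiW (u ++ X ++ v) ∈ P ∧ phiW (u ++ Y ++ v) ∉ P) ∨
    (∃ u v : List {f : Brandt n → Brandt n // IsAffine f}, u ≠ [] ∧ v ≠ [] ∧
      phiW (u ++ X ++ v) ∉ P ∧ phiW (u ++ Y ++ v) ∈ P) := by
  have : ∃ w0, phiW X w0 ≠ phiW Y w0 := by
    by_contra h'
    push_neg at h'
    exact hdiff (funext h')
  obtain ⟨w0, hw0⟩ := this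
  rcases w0 with _ | ⟨s, t⟩
  · rcases hx0 : phiW X none with _ | ⟨c, d⟩
    · rcases hy0 : phiW Y none with _ | ⟨c, d⟩
      · rw [hx0, hy0] at hw0; exact absurd rfl hw0
      · right
        have hGc : ∀ w, phiW Y w = some (c, d) := fun w => by
          rw [phiW_const Y (by rw [hy0]; simp) w, hy0]
        obtain ⟨u, v, hu, hv, h1, h2⟩ :=
          sep_const hn P hP Y X hY hX c d none hGc (by rw [hx0]; simp)
        exact ⟨u, v, hu, hv, h2, h1⟩
    · left
      have hFc : ∀ w, phiW X w = some (c, d) := fun w => by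
        rw [phiW_const X (by rw [hx0]; simp) w, hx0]
      exact sep_const hn P hP X Y hX hY c d none hFc (by rw [← hx0]; exact fun h => hw0 h.symm)
  · rcases hx0 : phiW X (some (s, t)) with _ | ⟨a, b⟩
    · rcases hy0 : phiW Y (some (s, t)) with _ | ⟨a, b⟩
      · rw [hx0, hy0] at hw0; exact absurd rfl hw0
      · right
        obtain ⟨u, v, hu, hv, h1, h2⟩ :=
          sep_main hn P hP Y X hY hX s t a b hy0 (by rw [hx0]; simp)
        exact ⟨u, v, hu, hv, h2, h1⟩
    · left
      exact sep_main hn P hP X Y hX hY s t a b hx0 (by rw [← hx0]; exact fun h => hw0 h.symm)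

end Lemmas4

/-- For `n ≥ 2`, `Σ = Aff(B_n)`, `P = {ξ_{(1,2)}} ∪ {⟨(k,l),(1,1)⟩ : k,l}` and
`L = {x ∈ Σ⁺ : φ(x) ∈ P}` (with `φ(f₁⋯f_k) = f₁ + ⋯ + f_k`), two nonempty words `x, y` over
`Σ` are syntactically congruent modulo `L` iff `φ(x) = φ(y)`. -/
theorem syntactic_congruence_of_L (n : ℕ) (hn : 2 ≤ n)
    (P : Set (Brandt n → Brandt n))
    (hP : P = {xi (some (⟨0, by omega⟩, ⟨1, by omega⟩))} ∪
      {f | ∃ k l : Fin n, f = sis k l ⟨0, by omega⟩ ⟨0, by omega⟩})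
    (L : Set (List {f : Brandt n → Brandt n // IsAffine f}))
    (hL : L = {x | x ≠ [] ∧ phiW x ∈ P})
    (x y : List {f : Brandt n → Brandt n // IsAffine f}) (hx : x ≠ []) (hy : y ≠ []) :
    (∀ u v : List {f : Brandt n → Brandt n // IsAffine f}, u ≠ [] → v ≠ [] →
        ((u ++ x ++ v) ∈ L ↔ (u ++ y ++ v) ∈ L)) ↔ phiW x = phiW y := by
  have hne3 : ∀ (a b c : List {f : Brandt n → Brandt n // IsAffine f}),
      a ≠ [] → a ++ b ++ c ≠ [] := by
    intro a b c ha hc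
    rw [List.append_eq_nil_iff, List.append_eq_nil_iff] at hc
    exact ha hc.1.1
  constructor
  · intro h
    by_contra hdiff
    rcases master_sep hn P hP x y hx hy hdiff with
      ⟨u, v, hu, hv, h1, h2⟩ | ⟨u, v, hu, hv, h1, h2⟩
    · have hmem : (u ++ x ++ v) ∈ L := by
        rw [hL]; exact ⟨hne3 u x v hu, h1⟩
      have := (h u v hu hv).mp hmem
      rw [hL] at this
      exact h2 this.2
    · have hmem : (u ++ y ++ v) ∈ L := by
        rw [hL]; exact ⟨hne3 u y v hu, h2⟩
      have := (h u v hu hv).mpr hmem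
      rw [hL] at this
      exact h1 this.2
  · intro heq u v hu hv
    have e : phiW (u ++ x ++ v) = phiW (u ++ y ++ v) := by
      rw [List.append_assoc u x v, List.append_assoc u y v,
        phiW_append u (x ++ v) hu (by simp [hx]),
        phiW_append x v hx hv,
        phiW_append u (y ++ v) hu (by simp [hy]),
        phiW_append y v hy hv, heq]
    rw [hL]
    constructor
    · rintro ⟨-, hm⟩
      exact ⟨hne3 u y v hu, e ▸ hm⟩
    · rintro ⟨-, hm⟩
      exact ⟨hne3 u x v hu, e ▸ hm⟩
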